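/- Let q > 0 and p be real numbers, and define y : ℝ → ℝ by y(t) := sqrt((q·cosh t + p·sinh t)² + sinh²t/q²). Then y(t) > 0 for all t, y is twice differentiable on ℝ, it satisfies the differential equation y''(t) - y(t) - 1/y(t)³ = 0 for all t ∈ ℝ, and it has the initial data y(0) = q and y'(0) = p. -/

import Mathlib

private lemma aux_ode (s a b : ℝ) (hs : 0 < s)
    (hident : 2 * b * s ^ 2 - a ^ 2 - 4 * s ^ 4 - 4 = 0) :
    (b * (2 * s) - a * (2 * (a / (2 * s)))) / (2 * s) ^ 2 - s - 1 / s ^ 3 = 0 := by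
  have hsne : s ≠ 0 := hs.ne'
  field_simp
  linear_combination hident

private lemma aux_ident (q p c s : ℝ) (hq' : q ≠ 0) (hcosh : c ^ 2 = s ^ 2 + 1) :
    2 * (2 * ((q * s + p * c) ^ 2 + (q * c + p * s) ^ 2) + 2 * (c ^ 2 + s ^ 2) / q ^ 2)
      * ((q * c + p * s) ^ 2 + s ^ 2 / q ^ 2)
    - (2 * (q * c + p * s) * (q * s + p * c) + 2 * s * c / q ^ 2) ^ 2
    - 4 * ((q * c + p * s) ^ 2 + s ^ 2 / q ^ 2) ^ 2 - 4 = 0 := by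
  field_simp
  linear_combination (4 * q ^ 4 * (c ^ 2 - s ^ 2 + 1)) * hcosh

/-- Proposition 6.1: the classical trajectory for the perturbed inverted oscillator
`p²/2 - q²/2 + 1/(2q²)` in terms of the unperturbed hyperbolic motion. -/
theorem perturbed_IHO_trajectory (q p : ℝ) (hq : 0 < q)
    (y : ℝ → ℝ)
    (hy : y = fun t => Real.sqrt ((q * Real.cosh t + p * Real.sinh t) ^ 2
      + (Real.sinh t) ^ 2 / q ^ 2)) :
    (∀ t, 0 < y t) ∧
    Differentiable ℝ y ∧ Differentiable ℝ (deriv y) ∧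
    (∀ t : ℝ, deriv (deriv y) t - y t - 1 / (y t) ^ 3 = 0) ∧
    y 0 = q ∧ deriv y 0 = p := by
  have hq' : q ≠ 0 := ne_of_gt hq
  set F : ℝ → ℝ := fun t => (q * Real.cosh t + p * Real.sinh t) ^ 2
      + (Real.sinh t) ^ 2 / q ^ 2 with hF
  set F' : ℝ → ℝ := fun t => 2 * (q * Real.cosh t + p * Real.sinh t)
      * (q * Real.sinh t + p * Real.cosh t) + 2 * Real.sinh t * Real.cosh t / q ^ 2 with hF'
  set F'' : ℝ → ℝ := fun t => 2 * ((q * Real.sinh t + p * Real.cosh t) ^ 2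
      + (q * Real.cosh t + p * Real.sinh t) ^ 2)
      + 2 * ((Real.cosh t) ^ 2 + (Real.sinh t) ^ 2) / q ^ 2 with hF''
  have hFpos : ∀ t, 0 < F t := by
    intro t
    rcases eq_or_ne (Real.sinh t) 0 with h | h
    · have hc : Real.cosh t = 1 := by
        nlinarith [Real.cosh_sq t, Real.cosh_pos t]
      have : F t = q ^ 2 := by simp [hF, h, hc]
      rw [this]; positivity
    · have h1 : (0:ℝ) ≤ (q * Real.cosh t + p * Real.sinh t) ^ 2 := sq_nonneg _
      have h2 : 0 < (Real.sinh t) ^ 2 / q ^ 2 := by positivity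
      simp only [hF]; linarith
  have hFne : ∀ t, F t ≠ 0 := fun t => (hFpos t).ne'
  have hsqrtpos : ∀ t, 0 < Real.sqrt (F t) := fun t => Real.sqrt_pos.2 (hFpos t)
  have hdF : ∀ t, HasDerivAt F (F' t) t := by
    intro t
    have h1 : HasDerivAt (fun t => q * Real.cosh t + p * Real.sinh t)
        (q * Real.sinh t + p * Real.cosh t) t :=
      ((Real.hasDerivAt_cosh t).const_mul q).add ((Real.hasDerivAt_sinh t).const_mul p)
    have h2 : HasDerivAt (fun t => (q * Real.cosh t + p * Real.sinh t) ^ 2)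
        (2 * (q * Real.cosh t + p * Real.sinh t) * (q * Real.sinh t + p * Real.cosh t)) t := by
      have := h1.fun_pow 2
      simpa [mul_comm, mul_assoc, mul_left_comm] using this
    have h3 : HasDerivAt (fun t => (Real.sinh t) ^ 2 / q ^ 2)
        (2 * Real.sinh t * Real.cosh t / q ^ 2) t := by
      have := ((Real.hasDerivAt_sinh t).pow 2).div_const (q ^ 2)
      simpa [mul_comm, mul_assoc, mul_left_comm] using this
    exact h2.add h3
  have hdF' : ∀ t, HasDerivAt F' (F'' t) t := by
    intro t
    have h1 : HasDerivAt (fun t => q * Real.cosh t + p * Real.sinh t)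
        (q * Real.sinh t + p * Real.cosh t) t :=
      ((Real.hasDerivAt_cosh t).const_mul q).add ((Real.hasDerivAt_sinh t).const_mul p)
    have h2 : HasDerivAt (fun t => q * Real.sinh t + p * Real.cosh t)
        (q * Real.cosh t + p * Real.sinh t) t :=
      ((Real.hasDerivAt_sinh t).const_mul q).add ((Real.hasDerivAt_cosh t).const_mul p)
    have h5 := ((h1.mul h2).const_mul 2).add
      ((((Real.hasDerivAt_sinh t).mul (Real.hasDerivAt_cosh t)).const_mul 2).div_const (q ^ 2))
    have hfun : F' = fun x => 2 * ((q * Real.cosh x + p * Real.sinh x)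
        * (q * Real.sinh x + p * Real.cosh x)) + 2 * (Real.sinh x * Real.cosh x) / q ^ 2 := by
      funext x; simp only [hF']; ring
    have hval : F'' t = 2 * ((q * Real.sinh t + p * Real.cosh t)
          * (q * Real.sinh t + p * Real.cosh t)
        + (q * Real.cosh t + p * Real.sinh t) * (q * Real.cosh t + p * Real.sinh t))
        + 2 * (Real.cosh t * Real.cosh t + Real.sinh t * Real.sinh t) / q ^ 2 := by
      simp only [hF'']; ring
    rw [hfun, hval]
    exact h5
  have hdy : ∀ t, HasDerivAt y (F' t / (2 * Real.sqrt (F t))) t := by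
    intro t
    rw [hy]
    exact (hdF t).sqrt (hFne t)
  have hypos : ∀ t, 0 < y t := by
    intro t; rw [hy]; exact hsqrtpos t
  have hyval : ∀ t, y t = Real.sqrt (F t) := fun t => by rw [hy]
  have hderiv_y : deriv y = fun t => F' t / (2 * Real.sqrt (F t)) := by
    funext t; exact (hdy t).deriv
  have hd2 : ∀ t, HasDerivAt (deriv y)
      ((F'' t * (2 * Real.sqrt (F t)) - F' t * (2 * (F' t / (2 * Real.sqrt (F t)))))
        / (2 * Real.sqrt (F t)) ^ 2) t := by
    intro t
    rw [hderiv_y]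
    have hden : HasDerivAt (fun t => 2 * Real.sqrt (F t))
        (2 * (F' t / (2 * Real.sqrt (F t)))) t := ((hdF t).sqrt (hFne t)).const_mul 2
    exact (hdF' t).div hden (mul_pos two_pos (hsqrtpos t)).ne'
  refine ⟨hypos, fun t => (hdy t).differentiableAt, fun t => (hd2 t).differentiableAt, ?_, ?_, ?_⟩
  · intro t
    have hs := hsqrtpos t
    have hs2 : Real.sqrt (F t) ^ 2 = F t := Real.sq_sqrt (hFpos t).le
    have hcosh : Real.cosh t ^ 2 = Real.sinh t ^ 2 + 1 := by
      nlinarith [Real.cosh_sq_sub_sinh_sq t]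
    have hident0 : 2 * F'' t * F t - F' t ^ 2 - 4 * F t ^ 2 - 4 = 0 := by
      simp only [hF, hF', hF'']
      exact aux_ident q p (Real.cosh t) (Real.sinh t) hq' hcosh
    have hident : 2 * F'' t * Real.sqrt (F t) ^ 2 - F' t ^ 2
        - 4 * Real.sqrt (F t) ^ 4 - 4 = 0 := by
      linear_combination hident0 + (2 * F'' t - 4 * (Real.sqrt (F t) ^ 2 + F t)) * hs2
    rw [(hd2 t).deriv, hyval t]
    exact aux_ode (Real.sqrt (F t)) (F' t) (F'' t) hs hident
  · rw [hy]; simp [Real.sqrt_sq hq.le]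
  · rw [hderiv_y]
    have h0 : F 0 = q ^ 2 := by simp [hF]
    have h0' : F' 0 = 2 * q * p := by simp [hF']
    simp only [h0, h0', Real.sqrt_sq hq.le]
    field_simp
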